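/- With the one-step (l = 1) data and definitions below, the identity B-check = d-check(1) ∘ m-check + m-check ∘ d-check(0) holds; that is, the operator B-check assembled from the B-components and the vertex-level relation elements equals the anticommutator (over F_2, the sum) of the cobordism-level map m-check with the two vertex-level maps d-check(0) and d-check(1). -/

import Mathlib

set_option maxHeartbeats 1000000


private lemma add_self_zmod2 {M : Type*} [AddCommGroup M] [Module (ZMod 2) M] (x : M) :
    x + x = 0 := by
  rw [← two_smul (ZMod 2) x, show (2 : ZMod 2) = 0 by decide, zero_smul]

/-- **The one-step (`l = 1`) identity `B-check = d-check(1) ∘ m-check + m-check ∘ d-check(0)`.**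
Vertex-level data at the two vertices `0` and `1` is given by the maps `d?_?(i)`,
`e?_?(i)`, and cobordism-level data by the maps `m?_?`, `n?_?`.  The operator `B-check`
assembled from the `B`-components and the vertex-level relation elements equals the sum
(over `F₂`) of the two composites of `m-check` with the vertex differentials. -/
theorem BCheck_eq_anticommutator {Co0 Cs0 Cu0 Co1 Cs1 Cu1 : Type*}
    [AddCommGroup Co0] [AddCommGroup Cs0] [AddCommGroup Cu0]
    [AddCommGroup Co1] [AddCommGroup Cs1] [AddCommGroup Cu1]
    [Module (ZMod 2) Co0] [Module (ZMod 2) Cs0] [Module (ZMod 2) Cu0]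
    [Module (ZMod 2) Co1] [Module (ZMod 2) Cs1] [Module (ZMod 2) Cu1]
    (d0oo : Co0 →ₗ[ZMod 2] Co0) (d0os : Co0 →ₗ[ZMod 2] Cs0)
    (d0uo : Cu0 →ₗ[ZMod 2] Co0) (d0us : Cu0 →ₗ[ZMod 2] Cs0)
    (e0ss : Cs0 →ₗ[ZMod 2] Cs0) (e0su : Cs0 →ₗ[ZMod 2] Cu0)
    (e0us : Cu0 →ₗ[ZMod 2] Cs0) (e0uu : Cu0 →ₗ[ZMod 2] Cu0)
    (d1oo : Co1 →ₗ[ZMod 2] Co1) (d1os : Co1 →ₗ[ZMod 2] Cs1)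
    (d1uo : Cu1 →ₗ[ZMod 2] Co1) (d1us : Cu1 →ₗ[ZMod 2] Cs1)
    (e1ss : Cs1 →ₗ[ZMod 2] Cs1) (e1su : Cs1 →ₗ[ZMod 2] Cu1)
    (e1us : Cu1 →ₗ[ZMod 2] Cs1) (e1uu : Cu1 →ₗ[ZMod 2] Cu1)
    (moo : Co0 →ₗ[ZMod 2] Co1) (mos : Co0 →ₗ[ZMod 2] Cs1)
    (muo : Cu0 →ₗ[ZMod 2] Co1) (mus : Cu0 →ₗ[ZMod 2] Cs1)
    (nss : Cs0 →ₗ[ZMod 2] Cs1) (nsu : Cs0 →ₗ[ZMod 2] Cu1)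
    (nus : Cu0 →ₗ[ZMod 2] Cs1) (nuu : Cu0 →ₗ[ZMod 2] Cu1) :
    -- vertex-level relation elements
    let A1uo : Cu1 →ₗ[ZMod 2] Co1 := d1oo ∘ₗ d1uo + d1uo ∘ₗ e1uu + d1uo ∘ₗ e1su ∘ₗ d1us
    let A1us : Cu1 →ₗ[ZMod 2] Cs1 :=
      e1us + d1os ∘ₗ d1uo + e1ss ∘ₗ d1us + d1us ∘ₗ e1uu + d1us ∘ₗ e1su ∘ₗ d1us
    let A0bsu : Cs0 →ₗ[ZMod 2] Cu0 := e0su ∘ₗ e0ss + e0uu ∘ₗ e0su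
    -- B-components
    let Boo : Co0 →ₗ[ZMod 2] Co1 :=
      moo ∘ₗ d0oo + d1oo ∘ₗ moo + d1uo ∘ₗ e1su ∘ₗ mos + d1uo ∘ₗ nsu ∘ₗ d0os
        + muo ∘ₗ e0su ∘ₗ d0os
    let Bos : Co0 →ₗ[ZMod 2] Cs1 :=
      mos ∘ₗ d0oo + d1os ∘ₗ moo + mus ∘ₗ e0su ∘ₗ d0os + d1us ∘ₗ nsu ∘ₗ d0os
        + d1us ∘ₗ e1su ∘ₗ mos + nss ∘ₗ d0os + e1ss ∘ₗ mos
    let Buo : Cu0 →ₗ[ZMod 2] Co1 :=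
      moo ∘ₗ d0uo + d1oo ∘ₗ muo + muo ∘ₗ e0su ∘ₗ d0us + d1uo ∘ₗ nsu ∘ₗ d0us
        + d1uo ∘ₗ e1su ∘ₗ mus + muo ∘ₗ e0uu + d1uo ∘ₗ nuu
    let Bus : Cu0 →ₗ[ZMod 2] Cs1 :=
      mos ∘ₗ d0uo + d1os ∘ₗ muo + mus ∘ₗ e0su ∘ₗ d0us + d1us ∘ₗ nsu ∘ₗ d0us
        + d1us ∘ₗ e1su ∘ₗ mus + mus ∘ₗ e0uu + d1us ∘ₗ nuu + nss ∘ₗ d0us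
        + e1ss ∘ₗ mus + nus
    let Bbss : Cs0 →ₗ[ZMod 2] Cs1 :=
      nss ∘ₗ e0ss + e1ss ∘ₗ nss + nus ∘ₗ e0su + e1us ∘ₗ nsu
    let Bbsu : Cs0 →ₗ[ZMod 2] Cu1 :=
      nsu ∘ₗ e0ss + e1su ∘ₗ nss + nuu ∘ₗ e0su + e1uu ∘ₗ nsu
    -- the assembled maps on `C^o ⊕ C^s`
    let dCheck0 : Co0 × Cs0 →ₗ[ZMod 2] Co0 × Cs0 :=
      LinearMap.prod
        (d0oo ∘ₗ LinearMap.fst (ZMod 2) Co0 Cs0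
          + (d0uo ∘ₗ e0su) ∘ₗ LinearMap.snd (ZMod 2) Co0 Cs0)
        (d0os ∘ₗ LinearMap.fst (ZMod 2) Co0 Cs0
          + (e0ss + d0us ∘ₗ e0su) ∘ₗ LinearMap.snd (ZMod 2) Co0 Cs0)
    let dCheck1 : Co1 × Cs1 →ₗ[ZMod 2] Co1 × Cs1 :=
      LinearMap.prod
        (d1oo ∘ₗ LinearMap.fst (ZMod 2) Co1 Cs1
          + (d1uo ∘ₗ e1su) ∘ₗ LinearMap.snd (ZMod 2) Co1 Cs1)
        (d1os ∘ₗ LinearMap.fst (ZMod 2) Co1 Cs1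
          + (e1ss + d1us ∘ₗ e1su) ∘ₗ LinearMap.snd (ZMod 2) Co1 Cs1)
    let mCheck : Co0 × Cs0 →ₗ[ZMod 2] Co1 × Cs1 :=
      LinearMap.prod
        (moo ∘ₗ LinearMap.fst (ZMod 2) Co0 Cs0
          + (muo ∘ₗ e0su + d1uo ∘ₗ nsu) ∘ₗ LinearMap.snd (ZMod 2) Co0 Cs0)
        (mos ∘ₗ LinearMap.fst (ZMod 2) Co0 Cs0
          + (nss + mus ∘ₗ e0su + d1us ∘ₗ nsu) ∘ₗ LinearMap.snd (ZMod 2) Co0 Cs0)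
    let BCheck : Co0 × Cs0 →ₗ[ZMod 2] Co1 × Cs1 :=
      LinearMap.prod
        (Boo ∘ₗ LinearMap.fst (ZMod 2) Co0 Cs0
          + (Buo ∘ₗ e0su + d1uo ∘ₗ Bbsu + muo ∘ₗ A0bsu + A1uo ∘ₗ nsu) ∘ₗ
              LinearMap.snd (ZMod 2) Co0 Cs0)
        (Bos ∘ₗ LinearMap.fst (ZMod 2) Co0 Cs0
          + (Bbss + Bus ∘ₗ e0su + d1us ∘ₗ Bbsu + mus ∘ₗ A0bsu + A1us ∘ₗ nsu) ∘ₗ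
              LinearMap.snd (ZMod 2) Co0 Cs0)
    BCheck = dCheck1 ∘ₗ mCheck + mCheck ∘ₗ dCheck0 := by
  intro A1uo A1us A0bsu Boo Bos Buo Bus Bbss Bbsu dCheck0 dCheck1 mCheck BCheck
  apply LinearMap.ext
  rintro ⟨a, b⟩
  apply Prod.ext <;>
    simp only [BCheck, dCheck0, dCheck1, mCheck, Boo, Bos, Buo, Bus, Bbss, Bbsu, A1uo, A1us,
      A0bsu, LinearMap.add_apply, LinearMap.coe_comp, Function.comp_apply, LinearMap.prod_apply,
      Function.prod, LinearMap.fst_apply, LinearMap.snd_apply, Prod.fst_add, Prod.snd_add,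
      map_add] <;>
    abel_nf <;>
    simp [two_nsmul, two_zsmul, add_self_zmod2]
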